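/- Fix σ ∈ {1, −1}, let n ∈ ℂ³, and let μ ∈ ℂ satisfy μ² = −σ (n ·σ n). Define the linear maps r₊, r₋ : ℂ³ → ℂ³ by r±(φ) := φ ×σ n ± μφ. Then both r₊ and r₋ are Lie algebra morphisms from (ℂ³, [φ,ψ] = (φ ×σ ψ) ×σ n) to (ℂ³, ×σ), i.e., r±((φ ×σ ψ) ×σ n) = r±(φ) ×σ r±(ψ) for all φ, ψ ∈ ℂ³; moreover r₊(φ) ×σ r₊(ψ) − r₋(φ) ×σ r₋(ψ) = 2μ ((φ ×σ ψ) ×σ n), so the 𝔞𝔫-bracket is recovered from the difference of the two morphisms. -/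
import Mathlib


/-- The σ-cross product, extended ℂ-bilinearly to ℂ³. -/
def crossC (σ : ℂ) (a b : Fin 3 → ℂ) : Fin 3 → ℂ :=
  ![a 1 * b 2 - a 2 * b 1,
    a 2 * b 0 - a 0 * b 2,
    σ * (a 0 * b 1 - a 1 * b 0)]

/-- The σ-dot product, extended ℂ-bilinearly to ℂ³. -/
def dotC (σ : ℂ) (a b : Fin 3 → ℂ) : ℂ :=
  a 0 * b 0 + a 1 * b 1 + σ * (a 2 * b 2)

/-- The maps `r₊(φ) := φ ×σ n + μ φ` and `r₋(φ) := φ ×σ n − μ φ`. -/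
def rPM (σ : ℂ) (n : Fin 3 → ℂ) (μ : ℂ) (φ : Fin 3 → ℂ) : Fin 3 → ℂ :=
  crossC σ φ n + μ • φ

/-- For σ = ±1 and `μ² = −σ (n ·σ n)`, both `r₊` and `r₋` are Lie algebra
morphisms from `(ℂ³, [φ,ψ] = (φ ×σ ψ) ×σ n)` to `(ℂ³, ×σ)`, and the 𝔞𝔫-bracket
is recovered as `r₊(φ) ×σ r₊(ψ) − r₋(φ) ×σ r₋(ψ) = 2μ ((φ ×σ ψ) ×σ n)`. -/
theorem r_matrix_morphism (σ : ℂ) (hσ : σ = 1 ∨ σ = -1) (n : Fin 3 → ℂ) (μ : ℂ)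
    (hμ : μ ^ 2 = -σ * dotC σ n n) :
    (∀ φ ψ : Fin 3 → ℂ,
      rPM σ n μ (crossC σ (crossC σ φ ψ) n) = crossC σ (rPM σ n μ φ) (rPM σ n μ ψ)) ∧
    (∀ φ ψ : Fin 3 → ℂ,
      rPM σ n (-μ) (crossC σ (crossC σ φ ψ) n)
        = crossC σ (rPM σ n (-μ) φ) (rPM σ n (-μ) ψ)) ∧
    (∀ φ ψ : Fin 3 → ℂ,
      crossC σ (rPM σ n μ φ) (rPM σ n μ ψ)
          - crossC σ (rPM σ n (-μ) φ) (rPM σ n (-μ) ψ)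
        = (2 * μ) • crossC σ (crossC σ φ ψ) n) := by

  have key : ∀ ν : ℂ, ν ^ 2 = -σ * dotC σ n n → ∀ φ ψ : Fin 3 → ℂ,
      rPM σ n ν (crossC σ (crossC σ φ ψ) n) = crossC σ (rPM σ n ν φ) (rPM σ n ν ψ) := by
    intro ν hν φ ψ
    simp only [dotC] at hν
    rcases hσ with h | h <;> subst h <;>
      funext i <;> fin_cases i <;>
      simp [rPM, crossC, dotC, Fin.isValue] <;>
      first
        | linear_combination (φ 2 * ψ 1 - φ 1 * ψ 2) * hν
        | linear_combination (φ 0 * ψ 2 - φ 2 * ψ 0) * hν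
        | linear_combination (φ 1 * ψ 0 - φ 0 * ψ 1) * hν
        | linear_combination (φ 0 * ψ 1 - φ 1 * ψ 0) * hν
  refine ⟨key μ hμ, key (-μ) (by rw [neg_pow]; simpa using hμ), ?_⟩
  intro φ ψ
  funext i
  fin_cases i <;>
    simp [rPM, crossC, dotC, Fin.isValue] <;>
    ring
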